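/- arXiv:1307.3817 — 2 statements merged into one kernel-verified Lean document; each statement's English description precedes it below -/
import Mathlib

section
/- Let (X,f) be a topological dynamical system. If (X,f) is an HY-system, then for every vector a = (a₁,…,a_r) of positive integers the system (X^r, f^{a₁} × f^{a₂} × ⋯ × f^{a_r}) is an HY-system. In particular, (X,f) is strongly multi-transitive. -/
open Function Set Filter Topology MeasureTheory

/-- A topological dynamical system `f : X → X` is (topologically) transitive if for every
two non-empty open subsets `U`, `V` there exists `n ≥ 1` with `f^[n] '' U ∩ V ≠ ∅`. -/
def IsTopTransitive {X : Type*} [TopologicalSpace X] (f : X → X) : Prop :=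
  ∀ U V : Set X, IsOpen U → IsOpen V → U.Nonempty → V.Nonempty →
    ∃ n : ℕ, 1 ≤ n ∧ (f^[n] '' U ∩ V).Nonempty

/-- Multi-transitivity with respect to a vector `a = (a₁, …, a_r)`: the product system
`(X^r, f^{a₁} × ⋯ × f^{a_r})` is transitive. -/
def MultiTransWrt {X : Type*} [TopologicalSpace X] (f : X → X) {r : ℕ} (a : Fin r → ℕ) : Prop :=
  IsTopTransitive (fun x : Fin r → X => fun i => f^[a i] (x i))

/-- `(X, f)` is multi-transitive if it is multi-transitive with respect to `(1, 2, …, n)`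
for every `n ≥ 1`. -/
def MultiTrans {X : Type*} [TopologicalSpace X] (f : X → X) : Prop :=
  ∀ n : ℕ, 1 ≤ n → MultiTransWrt f (fun i : Fin n => (i : ℕ) + 1)

/-- `(X, f)` is strongly multi-transitive if it is multi-transitive with respect to every
vector of positive integers. -/
def StrongMultiTrans {X : Type*} [TopologicalSpace X] (f : X → X) : Prop :=
  ∀ r : ℕ, 1 ≤ r → ∀ a : Fin r → ℕ, (∀ i, 1 ≤ a i) → MultiTransWrt f a

/-- The hitting time set `N(U, V) = {n ≥ 1 : f^[n] '' U ∩ V ≠ ∅}`. -/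
def HittingTimes {X : Type*} [TopologicalSpace X] (f : X → X) (U V : Set X) : Set ℕ :=
  {n : ℕ | 1 ≤ n ∧ (f^[n] '' U ∩ V).Nonempty}

/-- `(X, f)` is totally transitive if `f^[n]` is transitive for every `n ≥ 1`. -/
def TotallyTrans {X : Type*} [TopologicalSpace X] (f : X → X) : Prop :=
  ∀ n : ℕ, 1 ≤ n → IsTopTransitive (f^[n])

/-- `(X, f)` has dense small periodic sets if every non-empty open set contains a non-empty
closed set invariant under some iterate `f^[k]`, `k ≥ 1`. -/
def DenseSmallPeriodicSets {X : Type*} [TopologicalSpace X] (f : X → X) : Prop :=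
  ∀ U : Set X, IsOpen U → U.Nonempty →
    ∃ Y : Set X, Y.Nonempty ∧ IsClosed Y ∧ Y ⊆ U ∧ ∃ k : ℕ, 1 ≤ k ∧ f^[k] '' Y ⊆ Y

/-- An HY-system is a totally transitive system with dense small periodic sets. -/
def HYSystem {X : Type*} [TopologicalSpace X] (f : X → X) : Prop :=
  TotallyTrans f ∧ DenseSmallPeriodicSets f

/-!
In an HY-system every hitting time set `N(U, V)` is thickly syndetic. It is syndetic because a
small periodic set in `U ∩ f⁻ⁿV` contains a uniformly recurrent point. Two pairs of open sets have
a common hitting time (weak mixing): along a suitable progression `m + Kℕ` the hitting times of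
one pair are syndetic and those of the other pair are thick, the latter because a point of a small
periodic set whose period divides `K` stays in the target set at all times in `Kℕ`. Hence the hitting time sets form a filter base, so that
`N(U, V) ∩ N(U, f⁻¹V) ∩ ⋯ ∩ N(U, f⁻ᴸV)` contains some syndetic `N(U', V')`.
Every iterate `f^b` is again an HY-system and thickly syndetic sets form a filter, so the
coordinates of `f^{a₁} × ⋯ × f^{a_r}` have a common hitting time.
-/

def IsSyndetic (S : Set ℕ) : Prop :=
  ∃ G, ∀ a, ∃ n ∈ S, a ≤ n ∧ n ≤ a + G

def IsThick (S : Set ℕ) : Prop :=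
  ∀ G, ∃ t, ∀ j ≤ G, t + j ∈ S

theorem IsSyndetic.mono {S T : Set ℕ} (hS : IsSyndetic S) (hST : S ⊆ T) : IsSyndetic T := by
  obtain ⟨G, hG⟩ := hS
  refine ⟨G, fun a => ?_⟩
  obtain ⟨n, hn, hbounds⟩ := hG a
  exact ⟨n, hST hn, hbounds⟩

theorem IsSyndetic.inter_nonempty {S T : Set ℕ} (hS : IsSyndetic S) (hT : IsThick T) :
    (S ∩ T).Nonempty := by
  obtain ⟨G, hG⟩ := hS
  obtain ⟨t, ht⟩ := hT G
  obtain ⟨n, hn, htn, hnt⟩ := hG t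
  obtain ⟨j, rfl⟩ := Nat.exists_eq_add_of_le htn
  exact ⟨t + j, hn, ht j (by omega)⟩

theorem IsSyndetic.of_affine {S : Set ℕ} {m K : ℕ} (hK : 0 < K)
    (h : IsSyndetic {s | m + K * s ∈ S}) : IsSyndetic S := by
  obtain ⟨G, hG⟩ := h
  refine ⟨m + K * (G + 1), fun a => ?_⟩
  obtain ⟨s, hs, has, hsa⟩ := hG (a / K + 1)
  have hlt := Nat.lt_mul_div_succ a hK
  have hle := Nat.mul_div_le a K
  refine ⟨m + K * s, hs, ?_, ?_⟩ <;> nlinarith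

def thicklySyndetic : Filter ℕ where
  sets := {S | ∀ L, IsSyndetic {n | ∀ j ≤ L, n + j ∈ S}}
  univ_sets _ := ⟨0, fun a => ⟨a, fun _ _ => trivial, le_rfl, le_self_add⟩⟩
  sets_of_superset hS hST L := (hS L).mono fun _ hn j hj => hST (hn j hj)
  inter_sets {S T} hS hT L := by
    obtain ⟨G, hG⟩ := hS L
    obtain ⟨H, hH⟩ := hT (L + G)
    refine ⟨H + G, fun a => ?_⟩
    obtain ⟨n, hn, han, hna⟩ := hH a
    obtain ⟨n', hn', hnn', hn'n⟩ := hG n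
    refine ⟨n', fun j hj => ⟨hn' j hj, ?_⟩, by omega, by omega⟩
    have hmem := hn (n' - n + j) (by omega)
    rwa [show n + (n' - n + j) = n' + j by omega] at hmem

theorem mem_thicklySyndetic {S : Set ℕ} :
    S ∈ thicklySyndetic ↔ ∀ L, IsSyndetic {n | ∀ j ≤ L, n + j ∈ S} :=
  Iff.rfl

instance : thicklySyndetic.NeBot :=
  ⟨fun h => by
    obtain ⟨G, hG⟩ := mem_thicklySyndetic.1 (Filter.empty_mem_iff_bot.2 h) 0
    obtain ⟨n, hn, -⟩ := hG 0
    exact hn 0 le_rfl⟩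

theorem thicklySyndetic_le_atTop : thicklySyndetic ≤ atTop := by
  intro S hS L
  obtain ⟨N, hN⟩ := mem_atTop_sets.1 hS
  exact ⟨N, fun a => ⟨a + N, fun j _ => hN _ (by omega), by omega, le_rfl⟩⟩

section MinimalSets

variable {X : Type*} [TopologicalSpace X] [CompactSpace X] {h : X → X}

theorem exists_minimal_closed_mapsTo {Y : Set X} (hYne : Y.Nonempty) (hYc : IsClosed Y)
    (hY : MapsTo h Y Y) :
    ∃ M ⊆ Y, Minimal (fun C : Set X => C.Nonempty ∧ IsClosed C ∧ MapsTo h C C) M := by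
  refine zorn_superset_nonempty _ (fun c hc hchain hcne => ?_) Y ⟨hYne, hYc, hY⟩
  have : Nonempty c := hcne.to_subtype
  refine ⟨⋂₀ c, ⟨?_, isClosed_sInter fun C hC => (hc hC).2.1, ?_⟩,
    fun C hC => sInter_subset_of_mem hC⟩
  · exact IsCompact.nonempty_sInter_of_directed_nonempty_isCompact_isClosed
      (fun A hA B hB => (hchain.total hA hB).elim (fun hAB => ⟨A, hA, le_rfl, hAB⟩)
        fun hBA => ⟨B, hB, hBA, le_rfl⟩)
      (fun C hC => (hc hC).1) (fun C hC => (hc hC).2.1.isCompact) fun C hC => (hc hC).2.1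
  · exact fun x hx C hC => (hc hC).2.2 (hx C hC)

theorem isSyndetic_returns_of_minimal (hh : Continuous h) {M : Set X}
    (hM : Minimal (fun C : Set X => C.Nonempty ∧ IsClosed C ∧ MapsTo h C C) M)
    {y : X} (hy : y ∈ M) {W : Set X} (hW : IsOpen W) (hyW : y ∈ W) :
    IsSyndetic {s | h^[s] y ∈ W} := by
  obtain ⟨⟨-, hMc, hMh⟩, hMmin⟩ := hM
  -- the points of `M` that never enter `W` form a closed invariant set missing `y`
  have hcover : M ⊆ ⋃ s, h^[s] ⁻¹' W := by
    by_contra hnot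
    obtain ⟨z, hzM, hz⟩ := not_subset.1 hnot
    set C := M ∩ ⋂ s, h^[s] ⁻¹' Wᶜ
    have hC : C.Nonempty ∧ IsClosed C ∧ MapsTo h C C := by
      refine ⟨⟨z, hzM, by simpa using hz⟩,
        hMc.inter (isClosed_iInter fun s => hW.isClosed_compl.preimage (hh.iterate s)), ?_⟩
      rintro x ⟨hxM, hx⟩
      refine ⟨hMh hxM, mem_iInter.2 fun s => ?_⟩
      simpa only [mem_preimage, iterate_succ_apply] using mem_iInter.1 hx (s + 1)
    exact mem_iInter.1 (hMmin hC inter_subset_left hy).2 0 hyW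
  obtain ⟨t, ht⟩ := hMc.isCompact.elim_finite_subcover _
    (fun s => hW.preimage (hh.iterate s)) hcover
  obtain ⟨G, hG⟩ := t.exists_nat_subset_range
  refine ⟨G, fun a => ?_⟩
  obtain ⟨s, hst, hs⟩ := mem_iUnion₂.1 (ht (hMh.iterate a hy))
  have hsG := Finset.mem_range.1 (hG hst)
  exact ⟨s + a, show h^[s + a] y ∈ W by rwa [iterate_add_apply], by omega, by omega⟩

theorem exists_mem_isSyndetic_returns (hh : Continuous h) {Y : Set X} (hYne : Y.Nonempty)
    (hYc : IsClosed Y) (hY : MapsTo h Y Y) :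
    ∃ y ∈ Y, ∀ W, IsOpen W → y ∈ W → IsSyndetic {s | h^[s] y ∈ W} := by
  obtain ⟨M, hMY, hM⟩ := exists_minimal_closed_mapsTo hYne hYc hY
  obtain ⟨y, hy⟩ := hM.1.1
  exact ⟨y, hMY hy, fun W hW hyW => isSyndetic_returns_of_minimal hh hM hy hW hyW⟩

end MinimalSets

section HYSystem

variable {X : Type*} [TopologicalSpace X] {f : X → X}

theorem mem_hittingTimes_iff {U V : Set X} {n : ℕ} :
    n ∈ HittingTimes f U V ↔ 1 ≤ n ∧ (U ∩ f^[n] ⁻¹' V).Nonempty := by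
  rw [← image_inter_nonempty_iff]
  rfl

theorem TotallyTrans.hittingTimes_nonempty (hT : TotallyTrans f) {U V : Set X} (hU : IsOpen U)
    (hV : IsOpen V) (hUne : U.Nonempty) (hVne : V.Nonempty) :
    (HittingTimes f U V).Nonempty :=
  hT 1 le_rfl U V hU hV hUne hVne

theorem TotallyTrans.preimage_iterate_nonempty (hT : TotallyTrans f) {V : Set X} (hV : IsOpen V)
    (hVne : V.Nonempty) (m : ℕ) : (f^[m] ⁻¹' V).Nonempty := by
  rcases Nat.eq_zero_or_pos m with rfl | hm
  · exact hVne
  obtain ⟨v, hv⟩ := hVne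
  obtain ⟨n, hn, -, ⟨x, -, rfl⟩, hx⟩ :=
    hT m hm univ V isOpen_univ hV ⟨v, trivial⟩ ⟨v, hv⟩
  obtain ⟨n, rfl⟩ := Nat.exists_eq_add_of_le' hn
  exact ⟨(f^[m])^[n] x, by rwa [mem_preimage, ← iterate_succ_apply' (f^[m])]⟩

theorem TotallyTrans.iterate (hT : TotallyTrans f) {b : ℕ} (hb : 0 < b) : TotallyTrans f^[b] :=
  fun n hn => by
    rw [← iterate_mul]
    exact hT _ (Nat.mul_pos hb hn)

theorem DenseSmallPeriodicSets.iterate (hD : DenseSmallPeriodicSets f) (b : ℕ) :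
    DenseSmallPeriodicSets f^[b] := by
  intro U hU hUne
  obtain ⟨Y, hYne, hYc, hYU, k, hk, hYk⟩ := hD U hU hUne
  refine ⟨Y, hYne, hYc, hYU, k, hk, ?_⟩
  rw [← iterate_mul, mul_comm, iterate_mul]
  exact ((mapsTo_iff_image_subset.2 hYk).iterate b).image_subset

theorem HYSystem.iterate (hHY : HYSystem f) {b : ℕ} (hb : 0 < b) : HYSystem f^[b] :=
  ⟨hHY.1.iterate hb, hHY.2.iterate b⟩

theorem DenseSmallPeriodicSets.isSyndetic_hittingTimes_progression [CompactSpace X]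
    (hD : DenseSmallPeriodicSets f) (hf : Continuous f) {U V : Set X} (hU : IsOpen U)
    (hV : IsOpen V) {m : ℕ} (hm : m ∈ HittingTimes f U V) {k : ℕ} (hk : 0 < k) :
    ∃ K, 0 < K ∧ k ∣ K ∧ IsSyndetic {s | m + K * s ∈ HittingTimes f U V} := by
  rw [mem_hittingTimes_iff] at hm
  have hU' : IsOpen (U ∩ f^[m] ⁻¹' V) := hU.inter (hV.preimage (hf.iterate m))
  obtain ⟨Y, hYne, hYc, hYU, p, hp, hYp⟩ := hD _ hU' hm.2
  have hYpk : MapsTo f^[p * k] Y Y := by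
    rw [iterate_mul]
    exact (mapsTo_iff_image_subset.2 hYp).iterate k
  obtain ⟨y, hy, hrec⟩ := exists_mem_isSyndetic_returns (hf.iterate (p * k)) hYne hYc hYpk
  refine ⟨p * k, Nat.mul_pos hp hk, dvd_mul_left k p, (hrec _ hU' (hYU hy)).mono ?_⟩
  rintro s ⟨-, hs⟩
  refine mem_hittingTimes_iff.2 ⟨by omega, y, (hYU hy).1, ?_⟩
  rwa [← iterate_mul, mem_preimage, ← iterate_add_apply] at hs

theorem DenseSmallPeriodicSets.isSyndetic_hittingTimes [CompactSpace X]
    (hD : DenseSmallPeriodicSets f) (hf : Continuous f) {U V : Set X} (hU : IsOpen U)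
    (hV : IsOpen V) (hne : (HittingTimes f U V).Nonempty) : IsSyndetic (HittingTimes f U V) := by
  obtain ⟨m, hm⟩ := hne
  obtain ⟨K, hK, -, hsynd⟩ := hD.isSyndetic_hittingTimes_progression hf hU hV hm one_pos
  exact hsynd.of_affine hK

theorem HYSystem.isThick_hittingTimes_progression (hHY : HYSystem f) (hf : Continuous f)
    {A B : Set X} (hA : IsOpen A) (hB : IsOpen B) (hAne : A.Nonempty) (hBne : B.Nonempty) :
    ∃ k, 0 < k ∧ ∀ K m, 0 < K → k ∣ K →
      IsThick {s | m + K * s ∈ HittingTimes f A B} := by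
  obtain ⟨hT, hD⟩ := hHY
  obtain ⟨Y, ⟨y, hy⟩, -, hYB, k, hk, hYk⟩ := hD B hB hBne
  refine ⟨k, hk, fun K m hK ⟨c, hc⟩ G => ?_⟩
  set W := ⋂ j ∈ Finset.range (G + 1), f^[K * j] ⁻¹' B
  have hWo : IsOpen W := isOpen_biInter_finset fun j _ => hB.preimage (hf.iterate _)
  have hyW : y ∈ W := mem_iInter₂.2 fun j _ => by
    rw [mem_preimage, hc, mul_assoc, iterate_mul]
    exact hYB ((mapsTo_iff_image_subset.2 hYk).iterate _ hy)
  obtain ⟨t, ht⟩ : (HittingTimes f^[K] A (f^[m] ⁻¹' W)).Nonempty :=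
    hT K hK A _ hA (hWo.preimage (hf.iterate m)) hAne
      (hT.preimage_iterate_nonempty hWo ⟨y, hyW⟩ m)
  obtain ⟨ht1, x, hxA, hxW⟩ := mem_hittingTimes_iff.1 ht
  refine ⟨t, fun j hj =>
    mem_hittingTimes_iff.2 ⟨le_add_left (Nat.mul_pos hK (by omega)), x, hxA, ?_⟩⟩
  have hxB := mem_iInter₂.1 hxW j (Finset.mem_range.2 (by omega))
  rw [← iterate_mul, ← iterate_add_apply, mem_preimage, ← iterate_add_apply,
    show K * j + (m + K * t) = m + K * (t + j) by ring] at hxB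
  exact hxB

theorem HYSystem.hittingTimes_inter_nonempty [CompactSpace X] (hHY : HYSystem f)
    (hf : Continuous f) {A₀ B₀ A₁ B₁ : Set X} (hA₀ : IsOpen A₀) (hB₀ : IsOpen B₀)
    (hA₁ : IsOpen A₁) (hB₁ : IsOpen B₁) (hA₀ne : A₀.Nonempty) (hB₀ne : B₀.Nonempty)
    (hA₁ne : A₁.Nonempty) (hB₁ne : B₁.Nonempty) :
    (HittingTimes f A₀ B₀ ∩ HittingTimes f A₁ B₁).Nonempty := by
  obtain ⟨k, hk, hthick⟩ := hHY.isThick_hittingTimes_progression hf hA₀ hB₀ hA₀ne hB₀ne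
  obtain ⟨m, hm⟩ := hHY.1.hittingTimes_nonempty hA₁ hB₁ hA₁ne hB₁ne
  obtain ⟨K, hK, hkK, hsynd⟩ := hHY.2.isSyndetic_hittingTimes_progression hf hA₁ hB₁ hm hk
  obtain ⟨s, h₁, h₀⟩ := hsynd.inter_nonempty (hthick K m hK hkK)
  exact ⟨m + K * s, h₀, h₁⟩

theorem HYSystem.exists_hittingTimes_subset_inter [CompactSpace X] (hHY : HYSystem f)
    (hf : Continuous f) {A₀ B₀ A₁ B₁ : Set X} (hA₀ : IsOpen A₀) (hB₀ : IsOpen B₀)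
    (hA₁ : IsOpen A₁) (hB₁ : IsOpen B₁) (hA₀ne : A₀.Nonempty) (hB₀ne : B₀.Nonempty)
    (hA₁ne : A₁.Nonempty) (hB₁ne : B₁.Nonempty) :
    ∃ U V, IsOpen U ∧ IsOpen V ∧ U.Nonempty ∧ V.Nonempty ∧
      HittingTimes f U V ⊆ HittingTimes f A₀ B₀ ∩ HittingTimes f A₁ B₁ := by
  obtain ⟨m, hA, hB⟩ :=
    hHY.hittingTimes_inter_nonempty hf hA₀ hA₁ hB₀ hB₁ hA₀ne hA₁ne hB₀ne hB₁ne
  rw [mem_hittingTimes_iff] at hA hB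
  refine ⟨A₀ ∩ f^[m] ⁻¹' A₁, B₀ ∩ f^[m] ⁻¹' B₁, hA₀.inter (hA₁.preimage (hf.iterate m)),
    hB₀.inter (hB₁.preimage (hf.iterate m)), hA.2, hB.2, fun n hn => ?_⟩
  obtain ⟨hn1, x, ⟨hx₀, hx₁⟩, hy₀, hy₁⟩ := mem_hittingTimes_iff.1 hn
  refine ⟨mem_hittingTimes_iff.2 ⟨hn1, x, hx₀, hy₀⟩,
    mem_hittingTimes_iff.2 ⟨hn1, f^[m] x, hx₁, ?_⟩⟩
  rwa [mem_preimage, ← iterate_add_apply, add_comm, iterate_add_apply]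

theorem HYSystem.exists_hittingTimes_subset_biInter [CompactSpace X] (hHY : HYSystem f)
    (hf : Continuous f) {ι : Type*} {A B : ι → Set X} (hA : ∀ i, IsOpen (A i))
    (hB : ∀ i, IsOpen (B i)) (hAne : ∀ i, (A i).Nonempty) (hBne : ∀ i, (B i).Nonempty)
    {s : Finset ι} (hs : s.Nonempty) :
    ∃ U V, IsOpen U ∧ IsOpen V ∧ U.Nonempty ∧ V.Nonempty ∧
      HittingTimes f U V ⊆ ⋂ i ∈ s, HittingTimes f (A i) (B i) := by
  classical
  induction hs using Finset.Nonempty.cons_induction with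
  | singleton i => exact ⟨A i, B i, hA i, hB i, hAne i, hBne i, by simp⟩
  | cons i s _ _ ih =>
    obtain ⟨U, V, hU, hV, hUne, hVne, hUV⟩ := ih
    obtain ⟨U', V', hU', hV', hU'ne, hV'ne, hsub⟩ := hHY.exists_hittingTimes_subset_inter hf
      (hA i) (hB i) hU hV (hAne i) (hBne i) hUne hVne
    refine ⟨U', V', hU', hV', hU'ne, hV'ne, ?_⟩
    rw [Finset.cons_eq_insert, Finset.set_biInter_insert]
    exact hsub.trans (inter_subset_inter_right _ hUV)

theorem HYSystem.hittingTimes_mem_thicklySyndetic [CompactSpace X] (hHY : HYSystem f)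
    (hf : Continuous f) {U V : Set X} (hU : IsOpen U) (hV : IsOpen V) (hUne : U.Nonempty)
    (hVne : V.Nonempty) : HittingTimes f U V ∈ thicklySyndetic := by
  refine mem_thicklySyndetic.2 fun L => ?_
  obtain ⟨U', V', hU', hV', hU'ne, hV'ne, hsub⟩ :=
    hHY.exists_hittingTimes_subset_biInter hf (A := fun _ => U) (B := fun j => f^[j] ⁻¹' V)
      (fun _ => hU) (fun j => hV.preimage (hf.iterate j)) (fun _ => hUne)
      (hHY.1.preimage_iterate_nonempty hV hVne) (Finset.nonempty_range_add_one (n := L))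
  refine (hHY.2.isSyndetic_hittingTimes hf hU' hV'
    (hHY.1.hittingTimes_nonempty hU' hV' hU'ne hV'ne)).mono fun n hn j hj => ?_
  obtain ⟨hn1, x, hx, hxV⟩ :=
    mem_hittingTimes_iff.1 (mem_iInter₂.1 (hsub hn) j (Finset.mem_range.2 (by omega)))
  refine mem_hittingTimes_iff.2 ⟨by omega, x, hx, ?_⟩
  rwa [mem_preimage, add_comm, iterate_add_apply]

end HYSystem

section Products

variable {ι : Type*} [Finite ι] {X : ι → Type*} [∀ i, TopologicalSpace (X i)]
  {g : ∀ i, X i → X i}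

theorem isTopTransitive_piMap
    (hg : ∀ i (U V : Set (X i)), IsOpen U → IsOpen V → U.Nonempty → V.Nonempty →
      HittingTimes (g i) U V ∈ thicklySyndetic) :
    IsTopTransitive (Pi.map g) := by
  rintro U V hU hV ⟨x, hx⟩ ⟨y, hy⟩
  obtain ⟨u, hu, huU⟩ := isOpen_pi_iff'.1 hU x hx
  obtain ⟨v, hv, hvV⟩ := isOpen_pi_iff'.1 hV y hy
  obtain ⟨n, hn1, hn⟩ := (((eventually_ge_atTop 1).filter_mono thicklySyndetic_le_atTop).and
    (eventually_all.2 fun i => hg i (u i) (v i) (hu i).1 (hv i).1 ⟨x i, (hu i).2⟩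
      ⟨y i, (hv i).2⟩)).exists
  choose w hwu hwv using fun i => (mem_hittingTimes_iff.1 (hn i)).2
  refine ⟨n, hn1, _, ⟨w, huU fun i _ => hwu i, rfl⟩, hvV fun i _ => ?_⟩
  rw [Pi.map_iterate]
  exact hwv i

theorem DenseSmallPeriodicSets.piMap (hg : ∀ i, DenseSmallPeriodicSets (g i)) :
    DenseSmallPeriodicSets (Pi.map g) := by
  cases nonempty_fintype ι
  rintro U hU ⟨x, hx⟩
  obtain ⟨u, hu, huU⟩ := isOpen_pi_iff'.1 hU x hx
  choose Y hYne hYc hYu k hk hYk using fun i => hg i (u i) (hu i).1 ⟨x i, (hu i).2⟩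
  refine ⟨univ.pi Y, univ_pi_nonempty_iff.2 hYne, isClosed_set_pi fun i _ => hYc i,
    (pi_mono fun i _ => hYu i).trans huU, ∏ i, k i,
    Nat.succ_le_of_lt (Finset.prod_pos fun i _ => hk i), ?_⟩
  rintro _ ⟨z, hz, rfl⟩ i -
  obtain ⟨c, hc⟩ := Finset.dvd_prod_of_mem k (Finset.mem_univ i)
  rw [Pi.map_iterate, Pi.map_apply, hc, iterate_mul]
  exact (mapsTo_iff_image_subset.2 (hYk i)).iterate c (hz i trivial)

end Products

theorem HYSystem_products_HYSystem
    {X : Type*} [MetricSpace X] [CompactSpace X] (f : X → X) (hf : Continuous f)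
    (hHY : HYSystem f) :
    (∀ r : ℕ, 1 ≤ r → ∀ a : Fin r → ℕ, (∀ i, 1 ≤ a i) →
      HYSystem (fun x : Fin r → X => fun i => f^[a i] (x i))) ∧
    StrongMultiTrans f := by
  have hmulti : ∀ r (a : Fin r → ℕ), (∀ i, 1 ≤ a i) → MultiTransWrt f a := fun r a ha =>
    isTopTransitive_piMap fun i _ _ hU hV hUne hVne =>
      (hHY.iterate (ha i)).hittingTimes_mem_thicklySyndetic (hf.iterate _) hU hV hUne hVne
  refine ⟨fun r _ a ha => ⟨fun n hn => ?_, .piMap fun i => hHY.2.iterate (a i)⟩,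
    fun r _ => hmulti r⟩
  change IsTopTransitive (Pi.map fun i => f^[a i])^[n]
  rw [Pi.map_iterate]
  simp only [← iterate_mul]
  exact hmulti r _ fun i => Nat.mul_pos (ha i) hn
end

section
/- Let (X,f) be a topological dynamical system. Then (X,f) is strongly multi-transitive if and only if (X×X, f×f) is F[∞]-transitive, i.e., for every two non-empty open subsets U, V of X×X the hitting time set N_{f×f}(U,V) lies in F[∞]. -/
open Function Set Filter Topology MeasureTheory

/-!
Forward direction: given nonempty open boxes `U₁ × U₂`, `V₁ × V₂` and shifts `n₁, …, n_r`, apply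
strong multi-transitivity to the vector `(1, 1, 2, 2, …, r, r)`, the sets `U₁, U₂` and the
preimages `f^{-n_i} V₁, f^{-n_i} V₂`; these are nonempty because a transitive map of a compact
space is onto. Backward direction: `F[∞]`-mixing makes `f` weakly mixing, so by
Furstenberg's intersection lemma the hitting time sets `N(U_i, V_i)` of finitely many pairs all
contain some `N(W, W')`. Applying `F[∞]`-mixing to `W × W`, `W' × W'` with `r ≥ max a_i` gives
`k` with `k a_i ∈ N(W, W')` for every `i`.
-/

section

variable {X : Type*}

lemma piMap_iterate_image_pi_inter_pi_nonempty_iff {ι : Type*} (f : X → X) (a : ι → ℕ)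
    (U V : ι → Set X) (n : ℕ) :
    ((Pi.map fun i => f^[a i])^[n] '' univ.pi U ∩ univ.pi V).Nonempty ↔
      ∀ i, (f^[n * a i] '' U i ∩ V i).Nonempty := by
  simp only [image_inter_nonempty_iff, Pi.map_iterate, ← iterate_mul, mul_comm _ n]
  rw [← univ_pi_nonempty_iff, pi_inter_distrib]
  rfl

variable [TopologicalSpace X]

/-- `F[∞]`-mixing: every hitting time set of `f × f` lies in `F[∞]`. -/
def FamilyInftyMixing (f : X → X) : Prop :=
  ∀ U V : Set (X × X), IsOpen U → IsOpen V → U.Nonempty → V.Nonempty →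
    ∀ r : ℕ, 1 ≤ r → ∀ nv : Fin r → ℕ, ∃ k : ℕ, 1 ≤ k ∧
      ∀ i : Fin r, k * ((i : ℕ) + 1) + nv i ∈ HittingTimes (Prod.map f f) U V

lemma hittingTimes_mono (f : X → X) {U U' V V' : Set X} (hU : U ⊆ U') (hV : V ⊆ V') :
    HittingTimes f U V ⊆ HittingTimes f U' V' :=
  fun _ ⟨hn, hne⟩ => ⟨hn, hne.mono (inter_subset_inter (image_mono hU) hV)⟩

lemma mem_hittingTimes_prodMap (f : X → X) (U₁ U₂ V₁ V₂ : Set X) (n : ℕ) :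
    n ∈ HittingTimes (Prod.map f f) (U₁ ×ˢ U₂) (V₁ ×ˢ V₂) ↔
      n ∈ HittingTimes f U₁ V₁ ∧ n ∈ HittingTimes f U₂ V₂ := by
  simp only [HittingTimes, mem_ofPred_eq, Prod.map_iterate, prodMap_image_prod, prod_inter_prod,
    prod_nonempty_iff]
  tauto

lemma IsTopTransitive.of_semiconj {Y Z : Type*} [TopologicalSpace Y] [TopologicalSpace Z]
    {g : Y → Y} {h : Z → Z} {φ : Y → Z} (hφ : Continuous φ) (hφs : Surjective φ)
    (hconj : Semiconj φ g h) (hg : IsTopTransitive g) : IsTopTransitive h := by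
  intro U V hU hV hUne hVne
  obtain ⟨n, hn, _, ⟨x, hx, rfl⟩, hxV⟩ := hg _ _ (hU.preimage hφ) (hV.preimage hφ)
    (hUne.preimage hφs) (hVne.preimage hφs)
  exact ⟨n, hn, _, ⟨φ x, hx, (hconj.iterate_right n x).symm⟩, hxV⟩

lemma IsTopTransitive.surjective [CompactSpace X] [T2Space X] {f : X → X} (hf : Continuous f)
    (h : IsTopTransitive f) : Surjective f := by
  intro z
  by_contra hz
  obtain ⟨n, hn, _, ⟨x, -, rfl⟩, hx⟩ := h univ (range f)ᶜ isOpen_univ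
    (isCompact_range hf).isClosed.isOpen_compl ⟨z, trivial⟩ ⟨z, hz⟩
  obtain ⟨m, rfl⟩ := Nat.exists_eq_add_of_le' hn
  exact hx ⟨f^[m] x, (iterate_succ_apply' f m x).symm⟩

namespace StrongMultiTrans

variable {f : X → X} (hS : StrongMultiTrans f)
include hS

lemma isTopTransitive_piMap {ι : Type*} [Finite ι] [Nonempty ι] {a : ι → ℕ}
    (ha : ∀ i, 1 ≤ a i) : IsTopTransitive (Pi.map fun i => f^[a i]) := by
  let e := Finite.equivFin ι
  refine (hS _ Nat.card_pos (a ∘ e.symm) fun _ => ha _).of_semiconj (φ := fun x => x ∘ e)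
    (by fun_prop) (fun y => ⟨y ∘ e.symm, by simp [comp_assoc]⟩) fun x => ?_
  funext i
  simp [Pi.map]

lemma isTopTransitive : IsTopTransitive f :=
  (hS.isTopTransitive_piMap (ι := Unit) (a := fun _ => 1) fun _ => le_rfl).of_semiconj
    (continuous_apply ()) (fun z => ⟨fun _ => z, rfl⟩) fun _ => rfl

lemma exists_forall_mem_hittingTimes [CompactSpace X] [T2Space X] (hf : Continuous f)
    {ι : Type*} [Finite ι] [Nonempty ι] {a : ι → ℕ} (ha : ∀ i, 1 ≤ a i) (nv : ι → ℕ)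
    {U V : ι → Set X} (hU : ∀ i, IsOpen (U i)) (hV : ∀ i, IsOpen (V i))
    (hUne : ∀ i, (U i).Nonempty) (hVne : ∀ i, (V i).Nonempty) :
    ∃ k, 1 ≤ k ∧ ∀ i, k * a i + nv i ∈ HittingTimes f (U i) (V i) := by
  have hsurj := hS.isTopTransitive.surjective hf
  obtain ⟨k, hk, hne⟩ := hS.isTopTransitive_piMap ha (univ.pi U)
    (univ.pi fun i => f^[nv i] ⁻¹' V i)
    (isOpen_set_pi finite_univ fun i _ => hU i)
    (isOpen_set_pi finite_univ fun i _ => (hV i).preimage (hf.iterate _))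
    (univ_pi_nonempty_iff.2 hUne)
    (univ_pi_nonempty_iff.2 fun i => (hVne i).preimage (hsurj.iterate _))
  rw [piMap_iterate_image_pi_inter_pi_nonempty_iff] at hne
  refine ⟨k, hk, fun i => ⟨le_add_right (Nat.mul_le_mul hk (ha i)), ?_⟩⟩
  rw [add_comm, iterate_add, image_comp]
  exact image_inter_nonempty_iff.2 (hne i)

lemma familyInftyMixing [CompactSpace X] [T2Space X] (hf : Continuous f) :
    FamilyInftyMixing f := by
  intro U V hU hV ⟨u, hu⟩ ⟨v, hv⟩ r hr nv
  obtain ⟨U₁, U₂, hU₁, hU₂, hu₁, hu₂, hUsub⟩ := isOpen_prod_iff.1 hU u.1 u.2 hu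
  obtain ⟨V₁, V₂, hV₁, hV₂, hv₁, hv₂, hVsub⟩ := isOpen_prod_iff.1 hV v.1 v.2 hv
  have : Nonempty (Fin r) := ⟨⟨0, hr⟩⟩
  obtain ⟨k, hk, hhit⟩ := hS.exists_forall_mem_hittingTimes hf
    (ι := Bool × Fin r) (a := fun p => p.2 + 1) (fun _ => le_add_left le_rfl) (fun p => nv p.2)
    (U := fun p => cond p.1 U₁ U₂) (V := fun p => cond p.1 V₁ V₂)
    (by rintro ⟨_ | _, _⟩ <;> assumption) (by rintro ⟨_ | _, _⟩ <;> assumption)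
    (by rintro ⟨_ | _, _⟩ <;> exact ⟨_, ‹_›⟩) (by rintro ⟨_ | _, _⟩ <;> exact ⟨_, ‹_›⟩)
  exact ⟨k, hk, fun i => hittingTimes_mono _ hUsub hVsub <|
    (mem_hittingTimes_prodMap f U₁ U₂ V₁ V₂ _).2 ⟨hhit (true, i), hhit (false, i)⟩⟩

end StrongMultiTrans

namespace FamilyInftyMixing

variable {f : X → X} (hH : FamilyInftyMixing f)
include hH

lemma isTopTransitive_prodMap : IsTopTransitive (Prod.map f f) := by
  intro U V hU hV hUne hVne
  obtain ⟨k, -, hk⟩ := hH U V hU hV hUne hVne 1 le_rfl fun _ => 0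
  have hk0 := hk 0
  rw [Fin.val_zero, zero_add, mul_one, add_zero] at hk0
  exact ⟨k, hk0⟩

lemma exists_forall_mul_mem_hittingTimes {W W' : Set X} (hW : IsOpen W) (hW' : IsOpen W')
    (hWne : W.Nonempty) (hW'ne : W'.Nonempty) {ι : Type*} [Finite ι] {a : ι → ℕ}
    (ha : ∀ i, 1 ≤ a i) : ∃ k, 1 ≤ k ∧ ∀ i, k * a i ∈ HittingTimes f W W' := by
  obtain ⟨A, hA⟩ := Finite.exists_le a
  obtain ⟨k, hk, hhit⟩ := hH (W ×ˢ W) (W' ×ˢ W') (hW.prod hW) (hW'.prod hW')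
    (hWne.prod hWne) (hW'ne.prod hW'ne) (A + 1) le_add_self fun _ => 0
  refine ⟨k, hk, fun i => ?_⟩
  have hi := hhit ⟨a i - 1, Nat.lt_succ_of_le ((Nat.sub_le _ _).trans (hA i))⟩
  rw [Nat.sub_add_cancel (ha i), add_zero, mem_hittingTimes_prodMap] at hi
  exact hi.1

end FamilyInftyMixing

lemma IsTopTransitive.exists_hittingTimes_subset {f : X → X} (hf : Continuous f)
    (hmix : IsTopTransitive (Prod.map f f)) {ι : Type*} {s : Finset ι} (hs : s.Nonempty)
    {U V : ι → Set X} (hU : ∀ i, IsOpen (U i)) (hV : ∀ i, IsOpen (V i))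
    (hUne : ∀ i, (U i).Nonempty) (hVne : ∀ i, (V i).Nonempty) :
    ∃ W W' : Set X, IsOpen W ∧ IsOpen W' ∧ W.Nonempty ∧ W'.Nonempty ∧
      ∀ i ∈ s, HittingTimes f W W' ⊆ HittingTimes f (U i) (V i) := by
  induction hs using Finset.Nonempty.cons_induction with
  | singleton i =>
    exact ⟨U i, V i, hU i, hV i, hUne i, hVne i, by simp⟩
  | cons j s hj hs ih =>
    obtain ⟨W, W', hW, hW', hWne, hW'ne, hsub⟩ := ih
    obtain ⟨k, hk, hkhit⟩ := hmix _ _ (hW.prod hW') ((hU j).prod (hV j)) (hWne.prod hW'ne)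
      ((hUne j).prod (hVne j))
    obtain ⟨hkU, hkV⟩ := (mem_hittingTimes_prodMap f W W' (U j) (V j) k).1 ⟨hk, hkhit⟩
    refine ⟨W ∩ f^[k] ⁻¹' U j, W' ∩ f^[k] ⁻¹' V j, hW.inter ((hU j).preimage (hf.iterate k)),
      hW'.inter ((hV j).preimage (hf.iterate k)), image_inter_nonempty_iff.1 hkU.2,
      image_inter_nonempty_iff.1 hkV.2, fun i hi => ?_⟩
    rcases Finset.mem_cons.1 hi with rfl | hi
    · rintro n ⟨hn, _, ⟨x, ⟨-, hxU⟩, rfl⟩, -, hxV⟩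
      refine ⟨hn, _, ⟨f^[k] x, hxU, rfl⟩, ?_⟩
      rwa [(Commute.iterate_iterate_self f n k).eq]
    · exact (hittingTimes_mono f inter_subset_left inter_subset_left).trans (hsub i hi)

lemma FamilyInftyMixing.isTopTransitive_piMap {f : X → X} (hH : FamilyInftyMixing f)
    (hf : Continuous f) {ι : Type*} [Finite ι] [Nonempty ι] {a : ι → ℕ} (ha : ∀ i, 1 ≤ a i) :
    IsTopTransitive (Pi.map fun i => f^[a i]) := by
  have := Fintype.ofFinite ι
  intro S T hS hT ⟨x, hx⟩ ⟨y, hy⟩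
  obtain ⟨U, hU, hUS⟩ := isOpen_pi_iff'.1 hS x hx
  obtain ⟨V, hV, hVT⟩ := isOpen_pi_iff'.1 hT y hy
  obtain ⟨W, W', hW, hW', hWne, hW'ne, hsub⟩ :=
    hH.isTopTransitive_prodMap.exists_hittingTimes_subset hf Finset.univ_nonempty
      (fun i => (hU i).1) (fun i => (hV i).1) (fun i => ⟨x i, (hU i).2⟩)
      fun i => ⟨y i, (hV i).2⟩
  obtain ⟨k, hk, hhit⟩ := hH.exists_forall_mul_mem_hittingTimes hW hW' hWne hW'ne ha
  refine ⟨k, hk, ((piMap_iterate_image_pi_inter_pi_nonempty_iff f a U V k).2 fun i =>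
    (hsub i (Finset.mem_univ i) (hhit i)).2).mono (inter_subset_inter (image_mono hUS) hVT)⟩

end

theorem strongMultiTrans_iff_familyInfty_mixing
    {X : Type*} [MetricSpace X] [CompactSpace X] (f : X → X) (hf : Continuous f) :
    StrongMultiTrans f ↔
      ∀ U V : Set (X × X), IsOpen U → IsOpen V → U.Nonempty → V.Nonempty →
        ∀ r : ℕ, 1 ≤ r → ∀ nv : Fin r → ℕ, ∃ k : ℕ, 1 ≤ k ∧
          ∀ i : Fin r, k * ((i : ℕ) + 1) + nv i ∈
            HittingTimes (fun p : X × X => (f p.1, f p.2)) U V := by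
  constructor
  · exact fun hS => hS.familyInftyMixing hf
  · intro hH r hr a ha
    have : Nonempty (Fin r) := ⟨⟨0, hr⟩⟩
    exact FamilyInftyMixing.isTopTransitive_piMap hH hf ha
end
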